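/- Let F₂ = ℤ/2 and let S = {i ∈ ℕ : i ≥ 2 and i + 1 is not a power of 2}. (Note that if i ∈ S then 2i + 1 ∈ S.) Then the quotient of the multivariate polynomial algebra F₂[y_i : i ∈ S] by the ideal generated by the elements y_i² − y_{2i+1} for all i ∈ S is isomorphic, as an F₂-algebra, to the polynomial algebra F₂[y_e : e ∈ S, e even] on the even-indexed variables, via the map sending the class of y_{2^k(e+1) − 1} to y_e^{2^k} for e even in S and k ≥ 0. In particular, if each y_i is assigned degree i + 1, the quotient is a polynomial algebra whose generators all lie in odd degrees. -/

import Mathlib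

open MvPolynomial

/-- The index set `S = {i ∈ ℕ : i ≥ 2 and i + 1 is not a power of 2}`. -/
def nonMersenneSet : Set ℕ := {i : ℕ | 2 ≤ i ∧ ¬ ∃ j : ℕ, i + 1 = 2 ^ j}

/-- The even elements of `S`. -/
def evenNonMersenneSet : Set ℕ := {e : ℕ | e ∈ nonMersenneSet ∧ Even e}

/-- The ideal of `F₂[yᵢ : i ∈ S]` generated by the elements `yᵢ² - y_{2i+1}`
(note that `2i + 1 ∈ S` whenever `i ∈ S`). -/
noncomputable def dyerLashofIdeal : Ideal (MvPolynomial nonMersenneSet (ZMod 2)) :=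
  Ideal.span {p : MvPolynomial nonMersenneSet (ZMod 2) |
    ∃ i j : nonMersenneSet, (j : ℕ) = 2 * (i : ℕ) + 1 ∧ p = X i ^ 2 - X j}

/-!
Writing `i + 1 = 2 ^ k * (e + 1)` with `e + 1` odd, every `i ∈ S` lies on exactly one chain
`e, 2e + 1, 4e + 3, …` starting at an even `e ∈ S`, and the relations `yᵢ² = y_{2i+1}` make the
`k`-th variable of that chain equal to `y_e ^ 2 ^ k`. Over any coefficient ring, identifying each
variable of a family of ℕ-indexed chains with the `n`-th power of its predecessor leaves the
polynomial ring on the first variables of the chains.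
-/

section IteratedPowers

variable {R σ τ : Type*} [CommRing R] (n : ℕ) (f : τ × ℕ ≃ σ)

noncomputable def iteratedPowerIdeal : Ideal (MvPolynomial σ R) :=
  Ideal.span (Set.range fun tk : τ × ℕ => X (f tk) ^ n - X (f (tk.1, tk.2 + 1)))

noncomputable def iteratedPowerEval : MvPolynomial σ R →ₐ[R] MvPolynomial τ R :=
  aeval fun i => X (f.symm i).1 ^ n ^ (f.symm i).2

@[simp]
theorem iteratedPowerEval_X (t : τ) (k : ℕ) :
    iteratedPowerEval n f (X (f (t, k)) : MvPolynomial σ R) = X t ^ n ^ k := by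
  simp [iteratedPowerEval]

theorem iteratedPowerIdeal_le_ker :
    iteratedPowerIdeal n f ≤ RingHom.ker (iteratedPowerEval n f : MvPolynomial σ R →ₐ[R] _) := by
  rw [iteratedPowerIdeal, Ideal.span_le]
  rintro _ ⟨⟨t, k⟩, rfl⟩
  simp [pow_succ, pow_mul]

theorem mk_X_zero_pow_pow (t : τ) (k : ℕ) :
    Ideal.Quotient.mk (iteratedPowerIdeal n f) (X (f (t, 0)) : MvPolynomial σ R) ^ n ^ k =
      Ideal.Quotient.mk (iteratedPowerIdeal n f) (X (f (t, k))) := by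
  induction k with
  | zero => simp
  | succ k ih =>
    rw [pow_succ, pow_mul, ih, ← map_pow, Ideal.Quotient.mk_eq_mk_iff_sub_mem]
    exact Ideal.subset_span ⟨(t, k), rfl⟩

noncomputable def iteratedPowerLift :
    (MvPolynomial σ R ⧸ iteratedPowerIdeal n f) →ₐ[R] MvPolynomial τ R :=
  Ideal.Quotient.liftₐ _ (iteratedPowerEval n f) fun _ hp => iteratedPowerIdeal_le_ker n f hp

@[simp]
theorem iteratedPowerLift_mk (p : MvPolynomial σ R) :
    iteratedPowerLift n f (Ideal.Quotient.mk _ p) = iteratedPowerEval n f p :=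
  Ideal.Quotient.lift_mk _ _ _

noncomputable def quotientIteratedPowerIdealEquiv :
    (MvPolynomial σ R ⧸ iteratedPowerIdeal n f) ≃ₐ[R] MvPolynomial τ R :=
  AlgEquiv.ofAlgHom (iteratedPowerLift n f) (aeval fun t => Ideal.Quotient.mk _ (X (f (t, 0))))
    (algHom_ext fun t => by simp)
    (Ideal.Quotient.algHom_ext R <| algHom_ext fun i => by
      obtain ⟨⟨t, k⟩, rfl⟩ := f.surjective i
      simp [mk_X_zero_pow_pow])

theorem quotientIteratedPowerIdealEquiv_mk_X (t : τ) (k : ℕ) :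
    quotientIteratedPowerIdealEquiv n f
      (Ideal.Quotient.mk _ (X (f (t, k)) : MvPolynomial σ R)) = X t ^ n ^ k := by
  simp [quotientIteratedPowerIdealEquiv]

end IteratedPowers

theorem padicValNat_two_pow_mul_of_odd {m : ℕ} (hm : Odd m) (k : ℕ) :
    padicValNat 2 (2 ^ k * m) = k := by
  rw [padicValNat.mul (by positivity) hm.pos.ne', padicValNat.prime_pow,
    padicValNat.eq_zero_of_not_dvd hm.not_two_dvd_nat, add_zero]

theorem two_pow_mul_odd_inj {k l a b : ℕ} (ha : Odd a) (hb : Odd b)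
    (h : 2 ^ k * a = 2 ^ l * b) : k = l ∧ a = b := by
  have hkl : k = l := by
    rw [← padicValNat_two_pow_mul_of_odd ha k, h, padicValNat_two_pow_mul_of_odd hb]
  subst hkl
  exact ⟨rfl, Nat.eq_of_mul_eq_mul_left (by positivity) h⟩

theorem two_pow_mul_succ_sub_one_add_one (k e : ℕ) : 2 ^ k * (e + 1) - 1 + 1 = 2 ^ k * (e + 1) :=
  Nat.sub_add_cancel (Nat.one_le_iff_ne_zero.2 (by positivity))

theorem two_pow_mul_succ_sub_one_mem {e : ℕ} (he : e ∈ nonMersenneSet) (k : ℕ) :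
    2 ^ k * (e + 1) - 1 ∈ nonMersenneSet := by
  obtain ⟨he2, hnot⟩ := he
  have hle : e + 1 ≤ 2 ^ k * (e + 1) := Nat.le_mul_of_pos_left _ (by positivity)
  refine ⟨by omega, fun ⟨j, hj⟩ => hnot ?_⟩
  rw [two_pow_mul_succ_sub_one_add_one] at hj
  obtain ⟨m, -, hm⟩ := (Nat.dvd_prime_pow Nat.prime_two).1 (Dvd.intro_left _ hj)
  exact ⟨m, hm⟩

theorem exists_eq_two_pow_mul_succ {i : ℕ} (hnot : ¬ ∃ j, i + 1 = 2 ^ j) :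
    ∃ e ∈ evenNonMersenneSet, ∃ k, i + 1 = 2 ^ k * (e + 1) := by
  obtain ⟨k, m, hm, hkm⟩ := Nat.exists_eq_two_pow_mul_odd (n := i + 1) (by omega)
  have hm_not_pow : ¬ ∃ j, m = 2 ^ j := fun ⟨j, hj⟩ => hnot ⟨k + j, by rw [hkm, hj, pow_add]⟩
  have hm3 : 3 ≤ m := by
    obtain ⟨c, rfl⟩ := hm
    rcases c with _ | c
    · exact absurd ⟨0, rfl⟩ hm_not_pow
    · omega
  refine ⟨m - 1, ⟨⟨by omega, by rwa [Nat.sub_add_cancel (by omega)]⟩, ?_⟩, k, ?_⟩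
  · obtain ⟨c, rfl⟩ := hm
    exact ⟨c, by omega⟩
  · rwa [Nat.sub_add_cancel (by omega)]

def nonMersenneOfEven (ek : evenNonMersenneSet × ℕ) : nonMersenneSet :=
  ⟨2 ^ ek.2 * (ek.1 + 1) - 1, two_pow_mul_succ_sub_one_mem ek.1.2.1 ek.2⟩

theorem nonMersenneOfEven_bijective : Function.Bijective nonMersenneOfEven := by
  refine ⟨fun ⟨e, k⟩ ⟨e', k'⟩ h => ?_, fun i => ?_⟩
  · have h' : 2 ^ k * ((e : ℕ) + 1) = 2 ^ k' * ((e' : ℕ) + 1) := by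
      rw [← two_pow_mul_succ_sub_one_add_one, ← two_pow_mul_succ_sub_one_add_one k']
      exact congrArg (fun i : nonMersenneSet => (i : ℕ) + 1) h
    obtain ⟨rfl, hee'⟩ := two_pow_mul_odd_inj e.2.2.add_one e'.2.2.add_one h'
    rw [Subtype.ext (Nat.succ_injective hee')]
  · obtain ⟨e, he, k, hk⟩ := exists_eq_two_pow_mul_succ i.2.2
    exact ⟨(⟨e, he⟩, k), Subtype.ext (by simp only [nonMersenneOfEven]; omega)⟩

noncomputable def nonMersenneEquiv : evenNonMersenneSet × ℕ ≃ nonMersenneSet :=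
  Equiv.ofBijective _ nonMersenneOfEven_bijective

theorem coe_nonMersenneEquiv (e : evenNonMersenneSet) (k : ℕ) :
    (nonMersenneEquiv (e, k) : ℕ) = 2 ^ k * (e + 1) - 1 :=
  rfl

theorem coe_nonMersenneEquiv_succ (e : evenNonMersenneSet) (k : ℕ) :
    (nonMersenneEquiv (e, k + 1) : ℕ) = 2 * nonMersenneEquiv (e, k) + 1 := by
  have := two_pow_mul_succ_sub_one_add_one k e
  rw [coe_nonMersenneEquiv, coe_nonMersenneEquiv, pow_succ, mul_comm _ 2, mul_assoc]
  omega

theorem dyerLashofIdeal_eq_iteratedPowerIdeal :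
    dyerLashofIdeal = iteratedPowerIdeal 2 nonMersenneEquiv := by
  rw [dyerLashofIdeal, iteratedPowerIdeal]
  congr 1
  ext p
  constructor
  · rintro ⟨i, j, hij, rfl⟩
    obtain ⟨⟨e, k⟩, rfl⟩ := nonMersenneEquiv.surjective i
    refine ⟨(e, k), ?_⟩
    rw [Subtype.ext (hij.trans (coe_nonMersenneEquiv_succ e k).symm)]
  · rintro ⟨⟨e, k⟩, rfl⟩
    exact ⟨_, _, coe_nonMersenneEquiv_succ e k, rfl⟩

/-- The quotient of `F₂[yᵢ : i ∈ S]`, where `S = {i ≥ 2 : i + 1 not a power of 2}`,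
by the ideal generated by the `yᵢ² - y_{2i+1}` is isomorphic as an `F₂`-algebra to
the polynomial algebra `F₂[y_e : e ∈ S, e even]` on the even-indexed variables, via
the map sending the class of `y_{2^k (e+1) - 1}` to `y_e^(2^k)`.  In particular,
assigning `yᵢ` degree `i + 1`, the quotient is a polynomial algebra all of whose
generators lie in odd degrees `e + 1`. -/
theorem quotient_is_polynomial_on_even_generators :
    ∃ eqv : (MvPolynomial nonMersenneSet (ZMod 2) ⧸ dyerLashofIdeal)
        ≃ₐ[ZMod 2] MvPolynomial evenNonMersenneSet (ZMod 2),
      (∀ (e : evenNonMersenneSet) (k : ℕ) (i : nonMersenneSet),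
        (i : ℕ) = 2 ^ k * ((e : ℕ) + 1) - 1 →
          eqv (Ideal.Quotient.mk dyerLashofIdeal (X i)) = X e ^ (2 ^ k)) ∧
      (∀ e : evenNonMersenneSet, Odd ((e : ℕ) + 1)) := by
  refine ⟨(Ideal.quotientEquivAlgOfEq (ZMod 2) dyerLashofIdeal_eq_iteratedPowerIdeal).trans
    (quotientIteratedPowerIdealEquiv 2 nonMersenneEquiv), fun e k i hi => ?_,
    fun e => e.2.2.add_one⟩
  obtain rfl : i = nonMersenneEquiv (e, k) := Subtype.ext hi
  rw [AlgEquiv.trans_apply, Ideal.quotientEquivAlgOfEq_mk, quotientIteratedPowerIdealEquiv_mk_X]
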